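/- Let n > 2, a₁,…,aₙ ∈ Z with |a| = Σaᵢ, and suppose integers d₁, d₂ satisfy (−1)ⁿ(n d₁ + |a| d₂)(d₂ + 1)^{n−1} − 2P(−d₂) + 2(−1)ⁿ = 0, where P(t) = t·Σ_{i=0}^{n−2}(−1)^i C(n,i) t^{n−2−i} + (−1)ⁿ(1−n). Then either (d₁, d₂) = (−2, 0), or d₂ = −2 and d₁ = −(1 + (−1)^{n+1} − 2|a|)/n. -/
import Mathlib

private lemma key_lemma (m : ℕ) (t : ℤ) :
    (t - 1) ^ (m + 3)
      = t ^ 2 * ∑ i ∈ Finset.range (m + 2), (-1 : ℤ) ^ i * ((m + 3).choose i) * t ^ (m + 1 - i)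
        + (-1 : ℤ) ^ (m + 2) * ((m : ℤ) + 3) * t + (-1 : ℤ) ^ (m + 3) := by
  have h1 : (t - 1 : ℤ) ^ (m + 3)
      = ∑ j ∈ Finset.range (m + 3 + 1), (-1 : ℤ) ^ j * ((m + 3).choose j) * t ^ (m + 3 - j) := by
    rw [sub_pow, ← Finset.sum_range_reflect]
    apply Finset.sum_congr rfl
    intro j hj
    rw [Finset.mem_range] at hj
    show (-1 : ℤ) ^ ((m + 3 + 1 - 1 - j) + (m + 3)) * t ^ (m + 3 + 1 - 1 - j)
        * 1 ^ ((m + 3) - (m + 3 + 1 - 1 - j)) * ((m + 3).choose (m + 3 + 1 - 1 - j))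
        = (-1 : ℤ) ^ j * ((m + 3).choose j) * t ^ (m + 3 - j)
    rw [show m + 3 + 1 - 1 - j = m + 3 - j by omega, one_pow,
      Nat.choose_symm (by omega : j ≤ m + 3),
      show m + 3 - j + (m + 3) = j + 2 * (m + 3 - j) by omega,
      pow_add, pow_mul, neg_one_sq, one_pow]
    ring
  rw [show m + 3 + 1 = m + 2 + 1 + 1 by omega] at h1
  rw [Finset.sum_range_succ, Finset.sum_range_succ] at h1
  have h2 : t ^ 2 * ∑ i ∈ Finset.range (m + 2), (-1 : ℤ) ^ i * ((m + 3).choose i) * t ^ (m + 1 - i)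
      = ∑ i ∈ Finset.range (m + 2), (-1 : ℤ) ^ i * ((m + 3).choose i) * t ^ (m + 3 - i) := by
    rw [Finset.mul_sum]
    apply Finset.sum_congr rfl
    intro i hi
    rw [Finset.mem_range] at hi
    rw [show m + 3 - i = (m + 1 - i) + 2 by omega, pow_add]
    ring
  rw [h1, ← h2]
  have c1 : (m + 3).choose (m + 2 + 1) = 1 := Nat.choose_self _
  have c2 : (m + 3).choose (m + 2) = m + 3 := Nat.choose_succ_self_right _
  rw [c1, c2, show m + 3 - (m + 2 + 1) = 0 by omega, show m + 3 - (m + 2) = 1 by omega]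
  push_cast
  ring

theorem stmt_13 (n : ℕ) (hn : 2 < n) (a : Fin n → ℤ) (d₁ d₂ : ℤ)
    (P : ℤ → ℤ)
    (hP : ∀ t : ℤ, P t = t * ∑ i ∈ Finset.range (n - 1), (-1 : ℤ) ^ i * (n.choose i) * t ^ (n - 2 - i)
        + (-1 : ℤ) ^ n * (1 - n))
    (heq : (-1 : ℤ) ^ n * (n * d₁ + (∑ i, a i) * d₂) * (d₂ + 1) ^ (n - 1)
        - 2 * P (-d₂) + 2 * (-1 : ℤ) ^ n = 0) :
    (d₁ = -2 ∧ d₂ = 0) ∨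
      (d₂ = -2 ∧ (n : ℤ) * d₁ = -(1 + (-1 : ℤ) ^ (n + 1) - 2 * ∑ i, a i)) := by
  obtain ⟨m, rfl⟩ : ∃ m, n = m + 3 := ⟨n - 3, by omega⟩
  have hs1 : m + 3 - 1 = m + 2 := rfl
  have hs2 : m + 3 - 2 = m + 1 := rfl
  have hP' := hP (-d₂)
  have hkey2 := key_lemma m (-d₂)
  rw [show (-d₂ - 1 : ℤ) = (-1) * (d₂ + 1) by ring, mul_pow] at hkey2
  simp only [hs1, hs2] at hP' heq
  push_cast at hP' hkey2 heq
  have hc33 : (-1 : ℤ) ^ (m + 3) * (-1 : ℤ) ^ (m + 3) = 1 := by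
    rw [← pow_add]; exact Even.neg_one_pow ⟨m + 3, rfl⟩
  have hrel : (-1 : ℤ) ^ (m + 3) = -(-1 : ℤ) ^ (m + 2) := by rw [pow_succ]; ring
  have hQ : (-d₂) * P (-d₂) = (-1 : ℤ) ^ (m + 3) * ((d₂ + 1) ^ (m + 3) - (d₂ + 1)) := by
    rw [hP']
    linear_combination (-1 : ℤ) * hkey2 + (((m : ℤ) + 3) * d₂) * hrel
  have E2 : (((m : ℤ) + 3) * d₁ + (∑ i, a i) * d₂) * d₂ * (d₂ + 1) ^ (m + 2)
      = 2 - 2 * (d₂ + 1) ^ (m + 3) := by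
    linear_combination ((-1 : ℤ) ^ (m + 3) * d₂) * heq + (-2 * (-1 : ℤ) ^ (m + 3)) * hQ
      + (-((((m : ℤ) + 3) * d₁ + (∑ i, a i) * d₂) * d₂ * (d₂ + 1) ^ (m + 2)
          + 2 * (d₂ + 1) ^ (m + 3) - 2)) * hc33
  by_cases hd₂ : d₂ = 0
  · subst hd₂
    rw [hP'] at heq
    have h0 : (-1 : ℤ) ^ (m + 3) * (((m : ℤ) + 3) * (d₁ + 2)) = 0 := by linear_combination heq
    rcases mul_eq_zero.mp h0 with h | h
    · exact absurd h (pow_ne_zero _ (by norm_num))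
    · rcases mul_eq_zero.mp h with h' | h'
      · exfalso; omega
      · exact Or.inl ⟨by linarith, rfl⟩
  · have hgeom := geom_sum_mul (d₂ + 1) (m + 3)
    have hG1 : (∑ i ∈ Finset.range (m + 3), (d₂ + 1) ^ i)
        = (d₂ + 1) * (∑ i ∈ Finset.range (m + 2), (d₂ + 1) ^ i) + 1 := geom_sum_succ
    have hG2 : (∑ i ∈ Finset.range (m + 2), (d₂ + 1) ^ i)
        = (d₂ + 1) * (∑ i ∈ Finset.range (m + 1), (d₂ + 1) ^ i) + 1 := geom_sum_succ
    set G2 := ∑ i ∈ Finset.range (m + 1), (d₂ + 1) ^ i with hG2d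
    set G1 := ∑ i ∈ Finset.range (m + 2), (d₂ + 1) ^ i with hG1d
    set G := ∑ i ∈ Finset.range (m + 3), (d₂ + 1) ^ i with hGd
    have E3 : ((((m : ℤ) + 3) * d₁ + (∑ i, a i) * d₂) * (d₂ + 1) ^ (m + 2)) * d₂
        = ((-2) * G) * d₂ := by
      linear_combination E2 + 2 * hgeom
    have F := mul_right_cancel₀ hd₂ E3
    have hdvd : (d₂ + 1) ∣ 2 :=
      ⟨-((((m : ℤ) + 3) * d₁ + (∑ i, a i) * d₂) * (d₂ + 1) ^ (m + 1)) - 2 * G1,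
        by linear_combination F - 2 * hG1⟩
    have hub : d₂ ≤ 1 := by have := Int.le_of_dvd (by norm_num) hdvd; omega
    have hlb : -3 ≤ d₂ := by have := Int.le_of_dvd (by norm_num) (neg_dvd.mpr hdvd); omega
    interval_cases d₂
    · -- d₂ = -3
      exfalso
      have h4 : (4 : ℤ) ∣ (-2) * G := by
        rw [← F]
        exact ⟨(((m : ℤ) + 3) * d₁ + (∑ i, a i) * (-3)) * ((-3 : ℤ) + 1) ^ m, by ring⟩
      norm_num at hG1 hG2
      omega
    · -- d₂ = -2
      right
      refine ⟨rfl, ?_⟩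
      simp only [show ((-2 : ℤ) + 1) = -1 by norm_num] at F hGd
      rw [neg_one_geom_sum] at hGd
      rcases Nat.even_or_odd (m + 3) with hm | hm
      · rw [if_pos hm] at hGd
        have hp3 : (-1 : ℤ) ^ (m + 3) = 1 := hm.neg_one_pow
        have hp2 : (-1 : ℤ) ^ (m + 2) = -1 := by rw [pow_succ] at hp3; linarith
        have hp4 : (-1 : ℤ) ^ (m + 3 + 1) = -1 := by rw [pow_succ, hp3]; norm_num
        rw [hp2, hGd] at F
        rw [hp4]
        push_cast
        linear_combination -F
      · rw [if_neg (Nat.not_even_iff_odd.mpr hm)] at hGd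
        have hp3 : (-1 : ℤ) ^ (m + 3) = -1 := hm.neg_one_pow
        have hp2 : (-1 : ℤ) ^ (m + 2) = 1 := by rw [pow_succ] at hp3; linarith
        have hp4 : (-1 : ℤ) ^ (m + 3 + 1) = 1 := by rw [pow_succ, hp3]; norm_num
        rw [hp2, hGd] at F
        rw [hp4]
        push_cast
        linear_combination F
    · -- d₂ = -1
      exfalso; norm_num at hdvd
    · exact absurd rfl hd₂
    · -- d₂ = 1
      exfalso
      have h4 : (4 : ℤ) ∣ (-2) * G := by
        rw [← F]
        exact ⟨(((m : ℤ) + 3) * d₁ + (∑ i, a i) * 1) * ((1 : ℤ) + 1) ^ m, by ring⟩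
      norm_num at hG1 hG2
      omega
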